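/- Let t ≥ 3 be an integer, let G be a finite simple graph containing no cycle whose length lies in {8, 10, 12, …, 2t+2}, and let x be a vertex of G. Then the number of edges of G both of whose endpoints are at distance exactly t from x is at most (5/2)·|A_t(x)|; equivalently, twice the number of such edges is at most 5 times the number of vertices at distance exactly t from x. -/

import Mathlib

/-!
Let `A = A_t(x)` and fix a breadth-first-search parent function `p` towards `x`. If two vertices
of `A` have a common neighbour in `A`, their ancestors meet within two steps: otherwise the two
branches of the search tree up to their first common ancestor, closed through the common
neighbour, form an even cycle of length between `8` and `2t + 2`. Along a path `v₀ ⋯ v₄` in `A`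
the grandparents of `v₀, v₂, v₄` therefore agree, and `p(v₀) = p(v₄)` since otherwise
`v₀ p(v₀) p²(v₀) p(v₄) v₄ v₃ v₂ v₁` is an `8`-cycle. Along a path `v₀ ⋯ v₆` in `A` this gives
`p(v₀) = p(v₄)` and `p(v₂) = p(v₆)`, and then `v₀ p(v₀) v₆ v₅ ⋯ v₁` or
`v₀ p(v₀) v₄ v₅ v₆ p(v₆) v₂ v₁` is an `8`-cycle. So `G[A]` has no path on `7` vertices, and the
Erdős–Gallai bound for paths gives `∑_{v ∈ A} deg_A v ≤ 5 |A|`. That bound is proved by the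
classical induction on `A`: delete a vertex of small degree, or split `A` along a disconnection;
in the remaining case `G[A]` is connected of large minimum degree, and a path grows one vertex at
a time, either at an end or, when both ends have all their neighbours on it, by closing it into a
cycle (Pósa's rotation) and leaving the cycle along an edge.
-/

open Finset

namespace SimpleGraph

variable {V : Type*} {G : SimpleGraph V}

/-- Paths are lists of vertices, so `l.length` counts vertices, not edges. -/
structure IsPathIn (G : SimpleGraph V) (A : Finset V) (l : List V) : Prop where
  isChain : l.IsChain G.Adj
  nodup : l.Nodup
  mem : ∀ v ∈ l, v ∈ A

namespace IsPathIn

variable {A : Finset V} {l : List V}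

theorem cons (hl : IsPathIn G A l) {w : V} (hw : w ∈ A) (hwl : w ∉ l)
    (hadj : ∀ y ∈ l.head?, G.Adj w y) : IsPathIn G A (w :: l) :=
  ⟨hl.isChain.cons hadj, List.nodup_cons.2 ⟨hwl, hl.nodup⟩, by simpa [hw] using hl.mem⟩

theorem reverse (hl : IsPathIn G A l) : IsPathIn G A l.reverse :=
  ⟨List.isChain_reverse.2 (hl.isChain.imp fun _ _ h => h.symm), List.nodup_reverse.2 hl.nodup,
    by simpa using hl.mem⟩

theorem mono (hl : IsPathIn G A l) {B : Finset V} (hAB : A ⊆ B) : IsPathIn G B l :=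
  ⟨hl.isChain, hl.nodup, fun v hv => hAB (hl.mem v hv)⟩

end IsPathIn

theorem cycleChain_append_reverse {p q : List V} (h : (p ++ q).IsChain G.Adj) (hp : p ≠ [])
    (hq : q ≠ []) (hhead : G.Adj (p.head hp) (q.head hq))
    (hlast : G.Adj (p.getLast hp) (q.getLast hq)) :
    Cycle.Chain G.Adj (p ++ q.reverse : List V) := by
  obtain ⟨a, p, rfl⟩ := List.exists_cons_of_ne_nil hp
  rw [List.cons_append, Cycle.chain_coe_cons, List.append_assoc, ← List.cons_append,
    ← List.reverse_cons]
  refine h.left_of_append.append ?_ ?_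
  · rw [List.isChain_reverse, List.isChain_cons]
    refine ⟨?_, h.right_of_append.imp fun _ _ h => h.symm⟩
    rintro y hy
    rw [List.head?_eq_some_head hq, Option.mem_some_iff] at hy
    exact hy ▸ hhead.symm
  · intro x hx y hy
    rw [List.getLast?_eq_some_getLast (List.cons_ne_nil _ _), Option.mem_some_iff] at hx
    rw [List.reverse_cons, List.head?_append, List.head?_reverse,
      List.getLast?_eq_some_getLast hq] at hy
    simp only [Option.some_or, Option.mem_some_iff] at hy
    exact hx ▸ hy ▸ hlast

theorem exists_isPathIn_cons_of_cycleChain {A : Finset V} {c : List V}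
    (hc : Cycle.Chain G.Adj (c : Cycle V)) (hnd : c.Nodup) (hA : ∀ v ∈ c, v ∈ A) {u w : V}
    (hu : u ∈ c) (hw : w ∈ A) (hwc : w ∉ c) (hwu : G.Adj w u) :
    ∃ l, IsPathIn G A l ∧ l.length = c.length + 1 := by
  obtain ⟨s, r, rfl⟩ := List.append_of_mem hu
  have hrot : (s ++ u :: r).Perm (u :: (r ++ s)) := by
    simpa using (List.perm_append_comm (l₁ := s) (l₂ := u :: r))
  have hchain : (u :: (r ++ s)).IsChain G.Adj := by
    rw [Cycle.coe_eq_coe.2 (List.isRotated_append (l := s) (l' := u :: r)), List.cons_append,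
      Cycle.chain_coe_cons] at hc
    exact hc.prefix ⟨[u], by simp⟩
  refine ⟨w :: u :: (r ++ s), ⟨?_, ?_, ?_⟩, by simp; omega⟩
  · exact hchain.cons (by simpa using hwu)
  · exact List.nodup_cons.2 ⟨fun h => hwc (hrot.mem_iff.2 h), hrot.nodup_iff.1 hnd⟩
  · intro v hv
    rcases List.mem_cons.1 hv with rfl | hv
    · exact hw
    · exact hA v (hrot.mem_iff.2 hv)

section ErdosGallai

variable [DecidableRel G.Adj]

def degreeIn (G : SimpleGraph V) [DecidableRel G.Adj] (A : Finset V) (v : V) : ℕ :=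
  #{u ∈ A | G.Adj v u}

theorem card_filter_adj_product (A : Finset V) :
    #{p ∈ A ×ˢ A | G.Adj p.1 p.2} = ∑ v ∈ A, degreeIn G A v := by
  rw [card_filter, sum_product]
  exact sum_congr rfl fun v _ => (card_filter _ _).symm

theorem degreeIn_eq_of_subset {A B : Finset V} {v : V} (hBA : B ⊆ A)
    (hB : ∀ y ∈ A, G.Adj v y → y ∈ B) : degreeIn G A v = degreeIn G B v := by
  unfold degreeIn
  congr 1
  ext y
  simp only [mem_filter]
  exact ⟨fun h => ⟨hB y h.1 h.2, h.2⟩, fun h => ⟨hBA h.1, h.2⟩⟩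

variable [DecidableEq V]

theorem degreeIn_le_card_sub_one {A : Finset V} {v : V} (hv : v ∈ A) :
    degreeIn G A v ≤ #A - 1 := by
  rw [← card_erase_of_mem hv]
  exact card_le_card fun u hu => mem_erase.2 ⟨(mem_filter.1 hu).2.ne', (mem_filter.1 hu).1⟩

theorem sum_degreeIn_eq_sum_degreeIn_erase {A : Finset V} {v : V} (hv : v ∈ A) :
    ∑ u ∈ A, degreeIn G A u = ∑ u ∈ A.erase v, degreeIn G (A.erase v) u + 2 * degreeIn G A v := by
  have hsplit : ∀ u, degreeIn G A u = degreeIn G (A.erase v) u + if G.Adj u v then 1 else 0 := by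
    intro u
    unfold degreeIn
    rw [filter_erase]
    split_ifs with huv
    · rw [card_erase_add_one (mem_filter.2 ⟨hv, huv⟩)]
    · rw [erase_eq_of_notMem (fun h => huv (mem_filter.1 h).2), add_zero]
  have hback : ∑ u ∈ A.erase v, (if G.Adj u v then 1 else 0) = degreeIn G A v := by
    have hvv : v ∉ {u ∈ A | G.Adj u v} := fun h => G.irrefl (mem_filter.1 h).2
    rw [sum_boole, Nat.cast_id, filter_erase, erase_eq_of_notMem hvv, degreeIn]
    simp_rw [G.adj_comm]
  rw [← add_sum_erase A _ hv, sum_congr rfl fun u _ => hsplit u, sum_add_distrib, hback]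
  ring

theorem degreeIn_head_le {A : Finset V} {l : List V} (hne : l ≠ [])
    (hhead : ∀ y ∈ A, G.Adj (l.head hne) y → y ∈ l) :
    degreeIn G A (l.head hne) ≤
      #{i ∈ range (l.length - 1) | ∃ _ : i + 1 < l.length, G.Adj (l.head hne) l[i + 1]} := by
  have hpos : ∀ y ∈ A, G.Adj (l.head hne) y → 0 < l.idxOf y := fun y hyA hy =>
    Nat.pos_of_ne_zero fun h0 => hy.ne <| by
      rw [← List.getElem_idxOf (List.idxOf_lt_length_iff.2 (hhead y hyA hy))]
      simp_rw [h0, List.head_eq_getElem]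
  refine card_le_card_of_injOn (fun y => l.idxOf y - 1) (fun y hy => ?_) fun y hy y' hy' h => ?_
  · rw [mem_coe, mem_filter] at hy
    have hlt := List.idxOf_lt_length_iff.2 (hhead y hy.1 hy.2)
    have := hpos y hy.1 hy.2
    simp only [coe_filter, Set.mem_ofPred_eq, mem_range]
    refine ⟨by omega, by omega, ?_⟩
    simpa [Nat.sub_add_cancel this] using hy.2
  · simp only [coe_filter, Set.mem_ofPred_eq] at hy hy'
    have := hpos y hy.1 hy.2
    have := hpos y' hy'.1 hy'.2
    exact (List.idxOf_inj (hhead y hy.1 hy.2)).1 (by simp only at h; omega)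

theorem degreeIn_getLast_le {A : Finset V} {l : List V} (hne : l ≠ [])
    (hlast : ∀ y ∈ A, G.Adj (l.getLast hne) y → y ∈ l) :
    degreeIn G A (l.getLast hne) ≤
      #{i ∈ range (l.length - 1) | ∃ _ : i < l.length, G.Adj l[i] (l.getLast hne)} := by
  refine card_le_card_of_injOn l.idxOf (fun y hy => ?_) fun y hy y' _ h =>
    (List.idxOf_inj (hlast y (mem_filter.1 hy).1 (mem_filter.1 hy).2)).1 h
  rw [mem_coe, mem_filter] at hy
  have hlt := List.idxOf_lt_length_iff.2 (hlast y hy.1 hy.2)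
  have hne' : l.idxOf y ≠ l.length - 1 := fun h => hy.2.ne <| by
    rw [← List.getElem_idxOf hlt]
    simp_rw [h, List.getLast_eq_getElem]
  simp only [coe_filter, Set.mem_ofPred_eq, mem_range]
  exact ⟨by omega, hlt, by simpa using hy.2.symm⟩

theorem exists_adj_head_getElem_succ_adj_getLast {A : Finset V} {l : List V} (hne : l ≠ [])
    (hhead : ∀ y ∈ A, G.Adj (l.head hne) y → y ∈ l)
    (hlast : ∀ y ∈ A, G.Adj (l.getLast hne) y → y ∈ l)
    (hdeg : l.length ≤ degreeIn G A (l.head hne) + degreeIn G A (l.getLast hne)) :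
    ∃ (i : ℕ) (_ : i + 1 < l.length),
      G.Adj (l.head hne) l[i + 1] ∧ G.Adj l[i] (l.getLast hne) := by
  have hcard :
      #(range (l.length - 1)) < degreeIn G A (l.head hne) + degreeIn G A (l.getLast hne) := by
    have := List.length_pos_iff.2 hne
    rw [card_range]
    omega
  obtain ⟨i, hi⟩ := inter_nonempty_of_card_lt_card_add_card (filter_subset _ _)
    (filter_subset _ _) (hcard.trans_le (add_le_add (degreeIn_head_le hne hhead)
      (degreeIn_getLast_le hne hlast)))
  simp only [mem_inter, mem_filter] at hi
  obtain ⟨⟨-, h₁, hadj₁⟩, -, _, hadj₂⟩ := hi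
  exact ⟨i, h₁, hadj₁, hadj₂⟩
namespace IsPathIn

variable {A : Finset V} {l : List V}

theorem exists_perm_cycleChain (hl : IsPathIn G A l) (hne : l ≠ [])
    (hhead : ∀ y ∈ A, G.Adj (l.head hne) y → y ∈ l)
    (hlast : ∀ y ∈ A, G.Adj (l.getLast hne) y → y ∈ l)
    (hdeg : l.length ≤ degreeIn G A (l.head hne) + degreeIn G A (l.getLast hne)) :
    ∃ c : List V, c.Perm l ∧ Cycle.Chain G.Adj (c : Cycle V) := by
  obtain ⟨i, hi, hfirst, hsecond⟩ := exists_adj_head_getElem_succ_adj_getLast hne hhead hlast hdeg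
  refine ⟨l.take (i + 1) ++ (l.drop (i + 1)).reverse, ?_, ?_⟩
  · simpa using ((List.reverse_perm (l.drop (i + 1))).append_left (l.take (i + 1)))
  · refine cycleChain_append_reverse (by simpa using hl.isChain) (by simp; omega) (by simp; omega)
      ?_ ?_
    · simpa [List.head_take, List.head_drop] using hfirst
    · simpa [List.getLast_take, List.getLast_drop,
        List.getElem?_eq_getElem (by omega : i < l.length)] using hsecond

theorem exists_length_succ (hl : IsPathIn G A l) (hlA : l.length < #A)
    (hconn : ∀ B ⊆ A, B.Nonempty → (A \ B).Nonempty → ∃ u ∈ B, ∃ w ∈ A \ B, G.Adj u w)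
    (hdeg : ∀ v ∈ A, l.length ≤ 2 * degreeIn G A v) :
    ∃ l', IsPathIn G A l' ∧ l'.length = l.length + 1 := by
  rcases eq_or_ne l [] with rfl | hne
  · obtain ⟨v, hv⟩ := card_pos.1 hlA
    exact ⟨[v], ⟨List.isChain_singleton v, List.nodup_singleton v, by simpa using hv⟩, rfl⟩
  by_cases hhead : ∃ y ∈ A, G.Adj (l.head hne) y ∧ y ∉ l
  · obtain ⟨y, hyA, hy, hyl⟩ := hhead
    exact ⟨y :: l, hl.cons hyA hyl (by simpa [List.head?_eq_some_head hne] using hy.symm), rfl⟩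
  by_cases hlast : ∃ y ∈ A, G.Adj (l.getLast hne) y ∧ y ∉ l
  · obtain ⟨y, hyA, hy, hyl⟩ := hlast
    exact ⟨y :: l.reverse, hl.reverse.cons hyA (by simpa using hyl)
      (by simpa [List.getLast?_eq_some_getLast hne] using hy.symm), by simp⟩
  push Not at hhead hlast
  obtain ⟨c, hcl, hc⟩ := hl.exists_perm_cycleChain hne hhead hlast
    (by have := hdeg _ (hl.mem _ (List.head_mem hne))
        have := hdeg _ (hl.mem _ (List.getLast_mem hne))
        omega)
  have hcA : c.toFinset ⊆ A := fun v hv => hl.mem v (hcl.mem_iff.1 (List.mem_toFinset.1 hv))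
  have hcard : #c.toFinset = l.length := by
    rw [List.toFinset_card_of_nodup (hcl.nodup_iff.2 hl.nodup), hcl.length_eq]
  obtain ⟨u, hu, w, hw, huw⟩ := hconn c.toFinset hcA
    (by rw [← card_pos, hcard]; exact List.length_pos_iff.2 hne)
    (by rw [← card_pos, card_sdiff_of_subset hcA, hcard]; omega)
  rw [mem_sdiff, List.mem_toFinset] at hw
  rw [← hcl.length_eq]
  exact exists_isPathIn_cons_of_cycleChain hc (hcl.nodup_iff.2 hl.nodup)
    (fun v hv => hl.mem v (hcl.mem_iff.1 hv)) (List.mem_toFinset.1 hu) hw.1 hw.2 huw.symm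

end IsPathIn

theorem exists_isPathIn_length_eq {A : Finset V} {k : ℕ} (hk : k ≤ #A)
    (hconn : ∀ B ⊆ A, B.Nonempty → (A \ B).Nonempty → ∃ u ∈ B, ∃ w ∈ A \ B, G.Adj u w)
    (hdeg : ∀ v ∈ A, k ≤ 2 * degreeIn G A v + 1) :
    ∃ l, IsPathIn G A l ∧ l.length = k := by
  induction k with
  | zero => exact ⟨[], ⟨List.isChain_nil, List.nodup_nil, by simp⟩, rfl⟩
  | succ n ih =>
    obtain ⟨l, hl, rfl⟩ := ih (by omega) fun v hv => by have := hdeg v hv; omega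
    exact hl.exists_length_succ (by omega) hconn fun v hv => by have := hdeg v hv; omega

theorem sum_degreeIn_le_of_forall_isPathIn_length_lt (k : ℕ) (A : Finset V)
    (hA : ∀ l, IsPathIn G A l → l.length < k) :
    ∑ v ∈ A, degreeIn G A v ≤ (k - 2) * #A := by
  induction A using Finset.strongInduction with
  | H A ih =>
  have hsub : ∀ B ⊆ A, ∀ l, IsPathIn G B l → l.length < k := fun B hB l hl => hA l (hl.mono hB)
  by_cases hsmall : #A < k
  · calc ∑ v ∈ A, degreeIn G A v ≤ ∑ _v ∈ A, (k - 2) :=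
          sum_le_sum fun v hv => by have := degreeIn_le_card_sub_one (G := G) hv; omega
      _ = (k - 2) * #A := by rw [sum_const, smul_eq_mul, mul_comm]
  by_cases hlow : ∃ v ∈ A, 2 * degreeIn G A v ≤ k - 2
  · obtain ⟨v, hv, hvdeg⟩ := hlow
    have : ∑ u ∈ A.erase v, degreeIn G (A.erase v) u ≤ (k - 2) * #(A.erase v) :=
      ih _ (erase_ssubset hv) (hsub _ (erase_subset v A))
    rw [sum_degreeIn_eq_sum_degreeIn_erase hv, ← card_erase_add_one hv, mul_add_one]
    omega
  by_cases hsplit : ∃ B ⊆ A, B.Nonempty ∧ (A \ B).Nonempty ∧ ∀ u ∈ B, ∀ w ∈ A \ B, ¬G.Adj u w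
  · obtain ⟨B, hBA, hB, hAB, hnadj⟩ := hsplit
    have hBdeg : ∀ u ∈ B, degreeIn G A u = degreeIn G B u := fun u hu =>
      degreeIn_eq_of_subset hBA fun y hy huy => by_contra fun hyB =>
        hnadj u hu y (mem_sdiff.2 ⟨hy, hyB⟩) huy
    have hABdeg : ∀ u ∈ A \ B, degreeIn G A u = degreeIn G (A \ B) u := fun u hu =>
      degreeIn_eq_of_subset sdiff_subset fun y hy huy => mem_sdiff.2 ⟨hy, fun hyB =>
        hnadj y hyB u hu huy.symm⟩
    have ihB : ∑ u ∈ B, degreeIn G B u ≤ (k - 2) * #B :=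
      ih B (ssubset_of_subset_of_ne hBA ?_) (hsub B hBA)
    have ihAB : ∑ u ∈ A \ B, degreeIn G (A \ B) u ≤ (k - 2) * #(A \ B) :=
      ih (A \ B) (sdiff_ssubset hBA hB) (hsub _ sdiff_subset)
    · rw [← sum_sdiff hBA, sum_congr rfl hBdeg, sum_congr rfl hABdeg,
        ← card_sdiff_add_card_eq_card hBA, mul_add]
      exact add_le_add ihAB ihB
    · rintro rfl
      simp at hAB
  push Not at hlow hsplit
  obtain ⟨l, hl, hlk⟩ := exists_isPathIn_length_eq (k := k) (by omega) hsplit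
    fun v hv => by have := hlow v hv; omega
  exact absurd (hA l hl) (by omega)

end ErdosGallai

namespace Walk

theorem isCycle_cons_of_isPath {a b : V} (h : G.Adj b a) {r : G.Walk a b} (hr : r.IsPath)
    (hlen : 2 ≤ r.length) : (cons h r).IsCycle := by
  rw [isCycle_iff_isPath_tail_and_le_length, tail_cons, length_cons]
  exact ⟨(isPath_copy _ _ _).2 hr, by omega⟩

theorem isCycle_cons_reverse_append {u a b : V} (p : G.Walk u a) (q : G.Walk u b)
    (h : G.Adj b a) (hnd : (p.support ++ q.support.tail).Nodup) (hlen : 2 ≤ p.length + q.length) :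
    (cons h (p.reverse.append q)).IsCycle := by
  refine isCycle_cons_of_isPath h ?_ (by simpa using hlen)
  rw [isPath_def, support_append, support_reverse]
  exact ((List.reverse_perm _).append_right _).nodup_iff.2 hnd

end Walk

variable {x : V}

theorem exists_adj_dist_add_one_eq {v : V} (h : G.dist x v ≠ 0) :
    ∃ u, G.Adj v u ∧ G.dist x u + 1 = G.dist x v := by
  obtain ⟨p, hp⟩ := exists_walk_of_dist_ne_zero h
  have hnil : ¬p.Nil := fun hn => h (by rw [← hp, hn.length_eq_zero])
  have hadj := p.adj_penultimate hnil
  refine ⟨p.penultimate, hadj.symm, le_antisymm ?_ ?_⟩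
  · have := dist_le p.dropLast
    rw [Walk.length_dropLast] at this
    omega
  · rw [← dist_eq_one_iff_adj.2 hadj]
    exact hadj.reachable.dist_triangle_right x

/-- The junk value `v` is only taken when `G.dist x v = 0`. -/
noncomputable def bfsParent (G : SimpleGraph V) (x v : V) : V :=
  open Classical in
  if h : ∃ u, G.Adj v u ∧ G.dist x u + 1 = G.dist x v then h.choose else v

theorem adj_bfsParent_and_dist {v : V} (h : G.dist x v ≠ 0) :
    G.Adj v (G.bfsParent x v) ∧ G.dist x (G.bfsParent x v) + 1 = G.dist x v := by
  rw [bfsParent, dif_pos (exists_adj_dist_add_one_eq h)]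
  exact (exists_adj_dist_add_one_eq h).choose_spec

theorem dist_iterate_bfsParent {k : ℕ} {v : V} (hk : k ≤ G.dist x v) :
    G.dist x ((G.bfsParent x)^[k] v) = G.dist x v - k := by
  induction k with
  | zero => rfl
  | succ k ih =>
    have := (adj_bfsParent_and_dist (G := G) (x := x) (v := (G.bfsParent x)^[k] v)
      (by rw [ih (by omega)]; omega)).2
    rw [Function.iterate_succ_apply']
    omega

theorem adj_iterate_bfsParent {k : ℕ} {v : V} (hk : k < G.dist x v) :
    G.Adj ((G.bfsParent x)^[k] v) ((G.bfsParent x)^[k + 1] v) := by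
  rw [Function.iterate_succ_apply']
  exact (adj_bfsParent_and_dist (by rw [dist_iterate_bfsParent hk.le]; omega)).1

noncomputable def bfsWalk (G : SimpleGraph V) (x : V) :
    (k : ℕ) → (v : V) → k ≤ G.dist x v → G.Walk v ((G.bfsParent x)^[k] v)
  | 0, _, _ => .nil
  | k + 1, v, hk =>
    have hv := adj_bfsParent_and_dist (G := G) (x := x) (v := v) (by omega)
    .cons hv.1 (bfsWalk G x k (G.bfsParent x v) (by omega))

@[simp]
theorem length_bfsWalk {k : ℕ} {v : V} (hk : k ≤ G.dist x v) :
    (G.bfsWalk x k v hk).length = k := by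
  induction k generalizing v with
  | zero => rfl
  | succ k ih => simp [bfsWalk, ih]

theorem mem_support_bfsWalk {k : ℕ} {v y : V} {hk : k ≤ G.dist x v}
    (hy : y ∈ (G.bfsWalk x k v hk).support) : ∃ i ≤ k, (G.bfsParent x)^[i] v = y := by
  induction k generalizing v with
  | zero =>
    obtain rfl : y = v := by simpa [bfsWalk] using hy
    exact ⟨0, le_rfl, rfl⟩
  | succ k ih =>
    rcases List.mem_cons.1 hy with rfl | hy
    · exact ⟨0, by omega, rfl⟩
    · obtain ⟨i, hi, rfl⟩ := ih hy
      exact ⟨i + 1, by omega, rfl⟩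

theorem mem_support_tail_bfsWalk {k : ℕ} {v y : V} {hk : k ≤ G.dist x v}
    (hy : y ∈ (G.bfsWalk x k v hk).support.tail) :
    ∃ i, 0 < i ∧ i ≤ k ∧ (G.bfsParent x)^[i] v = y := by
  cases k with
  | zero => simp [bfsWalk] at hy
  | succ k =>
    obtain ⟨i, hi, rfl⟩ := mem_support_bfsWalk hy
    exact ⟨i + 1, by omega, by omega, rfl⟩

theorem isPath_bfsWalk {k : ℕ} {v : V} (hk : k ≤ G.dist x v) :
    (G.bfsWalk x k v hk).IsPath := by
  induction k generalizing v with
  | zero => exact Walk.IsPath.nil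
  | succ k ih =>
    have hv := adj_bfsParent_and_dist (G := G) (x := x) (v := v) (by omega)
    refine (Walk.cons_isPath_iff _ _).2 ⟨ih _, fun hmem => ?_⟩
    obtain ⟨i, hi, hiv⟩ := mem_support_bfsWalk hmem
    have := dist_iterate_bfsParent (G := G) (x := x) (k := i) (v := G.bfsParent x v) (by omega)
    rw [hiv] at this
    omega

theorem iterate_bfsParent_dist {v : V} (h : G.dist x v ≠ 0) :
    (G.bfsParent x)^[G.dist x v] v = x := by
  have hr : G.Reachable x ((G.bfsParent x)^[G.dist x v] v) :=
    (Reachable.of_dist_ne_zero h).trans ⟨G.bfsWalk x _ v le_rfl⟩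
  exact ((hr.dist_eq_zero_iff).1 (by rw [dist_iterate_bfsParent le_rfl, Nat.sub_self])).symm

/-- The cycle runs from `u` along `r` to `w`, up the search tree to the first common ancestor of
`u` and `w`, and back down to `u`. -/
theorem exists_isCycle_of_iterate_bfsParent_eq {t k : ℕ} {u w : V} (r : G.Walk u w)
    (hr : r.IsPath) (hrt : ∀ y ∈ r.support, G.dist x y = t) (hk : 0 < k) (hkt : k ≤ t)
    (heq : (G.bfsParent x)^[k] u = (G.bfsParent x)^[k] w)
    (hne : ∀ i < k, (G.bfsParent x)^[i] u ≠ (G.bfsParent x)^[i] w) :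
    ∃ (v : V) (c : G.Walk v v), c.IsCycle ∧ c.length = 2 * k + r.length := by
  have hu := hrt u r.start_mem_support
  have hw := hrt w r.end_mem_support
  have hup := adj_iterate_bfsParent (G := G) (x := x) (k := k - 1) (v := u) (by omega)
  rw [Nat.sub_add_cancel hk, heq] at hup
  let p := r.append (G.bfsWalk x k w (by omega))
  let q := G.bfsWalk x (k - 1) u (by omega)
  refine ⟨_, .cons hup (p.reverse.append q), Walk.isCycle_cons_reverse_append p q hup ?_ ?_, ?_⟩
  · rw [Walk.support_append, List.append_assoc, List.nodup_append, List.nodup_append]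
    refine ⟨hr.support_nodup, ⟨(isPath_bfsWalk _).support_nodup.sublist (List.tail_sublist _),
      (isPath_bfsWalk _).support_nodup.sublist (List.tail_sublist _), ?_⟩, ?_⟩
    · rintro _ ha _ hb rfl
      obtain ⟨i, hi, hik, rfl⟩ := mem_support_tail_bfsWalk ha
      obtain ⟨j, hj, hjk, hji⟩ := mem_support_tail_bfsWalk hb
      have hij := congrArg (G.dist x) hji
      rw [dist_iterate_bfsParent (by omega), dist_iterate_bfsParent (by omega)] at hij
      obtain rfl : j = i := by omega
      exact hne j (by omega) hji
    · rintro a ha _ hb rfl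
      have hat := hrt a ha
      rcases List.mem_append.1 hb with hb | hb
      all_goals
        obtain ⟨i, hi, hik, rfl⟩ := mem_support_tail_bfsWalk hb
        rw [dist_iterate_bfsParent (by omega)] at hat
        omega
  · have : r.length ≠ 0 := fun h0 => hne 0 hk (Walk.eq_of_length_eq_zero h0)
    simp [p, q]
    omega
  · simp [p, q]
    omega

def NoEvenCycleBetween (G : SimpleGraph V) (a b : ℕ) : Prop :=
  ∀ (v : V) (c : G.Walk v v), c.IsCycle → ¬(a ≤ c.length ∧ c.length ≤ b ∧ Even c.length)

variable {t : ℕ}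

theorem iterate_two_bfsParent_eq_of_adj_of_adj (ht : t ≠ 0)
    (hcyc : G.NoEvenCycleBetween 8 (2 * t + 2)) {u v w : V}
    (hl : ∀ y ∈ [u, v, w], G.dist x y = t) (huw : u ≠ w) (huv : G.Adj u v) (hvw : G.Adj v w) :
    (G.bfsParent x)^[2] u = (G.bfsParent x)^[2] w := by
  classical
  simp only [List.mem_cons, List.not_mem_nil, or_false, forall_eq_or_imp, forall_eq] at hl
  obtain ⟨hu, hv, hw⟩ := hl
  have hmeet : (G.bfsParent x)^[t] u = (G.bfsParent x)^[t] w := by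
    rw [← hu, iterate_bfsParent_dist (by omega), hu, ← hw, iterate_bfsParent_dist (by omega)]
  have hex : ∃ k, (G.bfsParent x)^[k] u = (G.bfsParent x)^[k] w := ⟨t, hmeet⟩
  have hkt : Nat.find hex ≤ t := Nat.find_min' hex hmeet
  by_cases hk : Nat.find hex ≤ 2
  · rw [← Nat.sub_add_cancel hk, Function.iterate_add_apply, Function.iterate_add_apply,
      Nat.find_spec hex]
  exfalso
  obtain ⟨_, c, hc, hlen⟩ := exists_isCycle_of_iterate_bfsParent_eq
    (Walk.ofSupport [u, v, w] (List.cons_ne_nil _ _) (by simp [huv, hvw]) : G.Walk u w)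
    (by simp [Walk.isPath_def, huv.ne, hvw.ne, huw]) (by simp [hu, hv, hw]) (by omega)
    hkt (Nat.find_spec hex) fun i hi => Nat.find_min hex hi
  simp only [Walk.length_ofSupport, List.length_cons, List.length_nil] at hlen
  exact hcyc _ c hc ⟨by omega, by omega, ⟨Nat.find hex + 1, by omega⟩⟩

theorem bfsParent_eq_of_isChain_five (ht : 3 ≤ t) (hcyc : G.NoEvenCycleBetween 8 (2 * t + 2))
    {v₀ v₁ v₂ v₃ v₄ : V} (hl : ∀ y ∈ [v₀, v₁, v₂, v₃, v₄], G.dist x y = t)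
    (hchain : [v₀, v₁, v₂, v₃, v₄].IsChain G.Adj) (hnd : [v₀, v₁, v₂, v₃, v₄].Nodup) :
    G.bfsParent x v₀ = G.bfsParent x v₄ := by
  have hadj := hchain
  simp only [List.isChain_cons_cons, List.isChain_singleton, and_true] at hadj
  obtain ⟨h₀₁, h₁₂, h₂₃, h₃₄⟩ := hadj
  have hdist := hl
  simp only [List.mem_cons, List.not_mem_nil, or_false, forall_eq_or_imp, forall_eq] at hdist
  obtain ⟨d₀, d₁, d₂, d₃, d₄⟩ := hdist
  have hne := hnd
  simp only [List.nodup_cons, List.mem_cons, List.not_mem_nil, or_false, not_or] at hne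
  obtain ⟨⟨-, n₀₂, -, n₀₄⟩, -, ⟨-, n₂₄⟩, -⟩ := hne
  have g₀₂ := iterate_two_bfsParent_eq_of_adj_of_adj (x := x) (by omega) hcyc
    (by simp [d₀, d₁, d₂]) n₀₂ h₀₁ h₁₂
  have g₂₄ := iterate_two_bfsParent_eq_of_adj_of_adj (x := x) (by omega) hcyc
    (by simp [d₂, d₃, d₄]) n₂₄ h₂₃ h₃₄
  by_contra hp
  obtain ⟨_, c, hc, hlen⟩ := exists_isCycle_of_iterate_bfsParent_eq
    (Walk.ofSupport _ (List.cons_ne_nil _ _) hchain : G.Walk v₀ v₄)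
    (by simpa [Walk.isPath_def] using hnd) (by simpa using hl) (k := 2) (by omega) (by omega)
    (g₀₂.trans g₂₄) fun i hi => by
      interval_cases i
      exacts [n₀₄, hp]
  simp only [Walk.length_ofSupport, List.length_cons, List.length_nil] at hlen
  exact hcyc _ c hc ⟨by omega, by omega, ⟨4, by omega⟩⟩

theorem bfsParent_eq_of_isChain_seven (ht : 3 ≤ t) (hcyc : G.NoEvenCycleBetween 8 (2 * t + 2))
    {v₀ v₁ v₂ v₃ v₄ v₅ v₆ : V} (hl : ∀ y ∈ [v₀, v₁, v₂, v₃, v₄, v₅, v₆], G.dist x y = t)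
    (hchain : [v₀, v₁, v₂, v₃, v₄, v₅, v₆].IsChain G.Adj)
    (hnd : [v₀, v₁, v₂, v₃, v₄, v₅, v₆].Nodup) :
    G.bfsParent x v₀ = G.bfsParent x v₆ := by
  have hfirst : [v₀, v₁, v₂, v₃, v₄] <+: [v₀, v₁, v₂, v₃, v₄, v₅, v₆] := ⟨[v₅, v₆], rfl⟩
  have hlast : [v₂, v₃, v₄, v₅, v₆] <:+ [v₀, v₁, v₂, v₃, v₄, v₅, v₆] := ⟨[v₀, v₁], rfl⟩
  have p₀₄ := bfsParent_eq_of_isChain_five ht hcyc (fun y hy => hl y (hfirst.subset hy))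
    (hchain.prefix hfirst) (hnd.sublist hfirst.sublist)
  have p₂₆ := bfsParent_eq_of_isChain_five ht hcyc (fun y hy => hl y (hlast.subset hy))
    (hchain.suffix hlast) (hnd.sublist hlast.sublist)
  by_contra hp
  have hadj := hchain
  simp only [List.isChain_cons_cons, List.isChain_singleton, and_true] at hadj
  obtain ⟨h₀₁, h₁₂, -, -, h₄₅, h₅₆⟩ := hadj
  have hdist := hl
  simp only [List.mem_cons, List.not_mem_nil, or_false, forall_eq_or_imp, forall_eq] at hdist
  obtain ⟨d₀, -, d₂, -, d₄, d₅, d₆⟩ := hdist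
  have hpar : ∀ y, G.dist x y = t →
      G.Adj y (G.bfsParent x y) ∧ G.dist x (G.bfsParent x y) + 1 = t := fun y hy =>
    hy ▸ adj_bfsParent_and_dist (by omega)
  have hcycle : [v₀, G.bfsParent x v₀, v₄, v₅, v₆, G.bfsParent x v₆, v₂, v₁].IsChain G.Adj := by
    simp only [List.isChain_cons_cons, List.isChain_singleton, and_true]
    exact ⟨(hpar v₀ d₀).1, p₀₄ ▸ (hpar v₄ d₄).1.symm, h₄₅, h₅₆, (hpar v₆ d₆).1,
      p₂₆ ▸ (hpar v₂ d₂).1.symm, h₁₂.symm⟩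
  have hnodup : [v₀, G.bfsParent x v₀, v₄, v₅, v₆, G.bfsParent x v₆, v₂, v₁].Nodup := by
    have e₀ := (hpar v₀ d₀).2
    have e₆ := (hpar v₆ d₆).2
    generalize G.bfsParent x v₀ = p at e₀ hp ⊢
    generalize G.bfsParent x v₆ = q at e₆ hp ⊢
    generalize G.dist x = d at e₀ e₆ hl
    simp only [List.nodup_cons, List.mem_cons, List.not_mem_nil, or_false, not_or,
      List.nodup_nil, and_true, not_false_eq_true, forall_eq_or_imp, forall_eq] at hnd hl ⊢
    and_intros <;> intro h <;> simp_all
  exact hcyc _ (.cons h₀₁.symm (Walk.ofSupport _ (List.cons_ne_nil _ _) hcycle : G.Walk v₀ v₁))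
    (Walk.isCycle_cons_of_isPath _ (by simpa [Walk.isPath_def] using hnodup) (by simp))
    ⟨by simp, by simp; omega, by simp; decide⟩

theorem length_lt_seven_of_isChain (ht : 3 ≤ t) (hcyc : G.NoEvenCycleBetween 8 (2 * t + 2))
    {l : List V} (hchain : l.IsChain G.Adj) (hnd : l.Nodup) (hl : ∀ y ∈ l, G.dist x y = t) :
    l.length < 7 := by
  by_contra! h7
  obtain ⟨v₀, v₁, v₂, v₃, v₄, v₅, v₆, l, rfl⟩ :
      ∃ v₀ v₁ v₂ v₃ v₄ v₅ v₆ l', l = v₀ :: v₁ :: v₂ :: v₃ :: v₄ :: v₅ :: v₆ :: l' := by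
    match l, h7 with
    | v₀ :: v₁ :: v₂ :: v₃ :: v₄ :: v₅ :: v₆ :: l', _ => exact ⟨v₀, v₁, v₂, v₃, v₄, v₅, v₆, l', rfl⟩
  have hpre : [v₀, v₁, v₂, v₃, v₄, v₅, v₆] <+: v₀ :: v₁ :: v₂ :: v₃ :: v₄ :: v₅ :: v₆ :: l :=
    ⟨l, rfl⟩
  replace hchain := hchain.prefix hpre
  replace hnd := hnd.sublist hpre.sublist
  replace hl := fun y hy => hl y (hpre.subset hy)
  obtain ⟨_, c, hc, hlen⟩ := exists_isCycle_of_iterate_bfsParent_eq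
    (Walk.ofSupport _ (List.cons_ne_nil _ _) hchain : G.Walk v₀ v₆)
    (by simpa [Walk.isPath_def] using hnd) (by simpa using hl) (k := 1) (by omega) (by omega)
    (bfsParent_eq_of_isChain_seven ht hcyc hl hchain hnd) fun i hi => by
      obtain rfl : i = 0 := by omega
      exact fun h => (List.nodup_cons.1 hnd).1 (by simp [show v₀ = v₆ from h])
  simp only [Walk.length_ofSupport, List.length_cons, List.length_nil] at hlen
  exact hcyc _ c hc ⟨by omega, by omega, ⟨4, by omega⟩⟩

end SimpleGraph

/-- If `t ≥ 3` and `G` has no cycle of length in `{8, 10, ..., 2t+2}`, then the number of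
edges of `G` both of whose endpoints are at distance exactly `t` from `x` is at most
`(5/2)` times the number of vertices at distance exactly `t` from `x`.  Here edges are
counted as ordered pairs of adjacent vertices, i.e. each edge is counted twice. -/
theorem edges_inside_level_t_bound
    (t : ℕ) (ht : 3 ≤ t) (V : Type) [Fintype V] (G : SimpleGraph V)
    (hcyc : ∀ (v : V) (w : G.Walk v v), w.IsCycle →
      ¬(8 ≤ w.length ∧ w.length ≤ 2 * t + 2 ∧ Even w.length))
    (x : V) :
    {p : V × V | G.Adj p.1 p.2 ∧ G.dist x p.1 = t ∧ G.dist x p.2 = t}.ncard ≤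
      5 * {v : V | G.dist x v = t}.ncard := by
  classical
  set A : Finset V := {v | G.dist x v = t}
  have hpairs : {p : V × V | G.Adj p.1 p.2 ∧ G.dist x p.1 = t ∧ G.dist x p.2 = t} =
      ↑({p ∈ A ×ˢ A | G.Adj p.1 p.2}) := by
    ext p
    simp [A, and_comm, and_assoc]
  have hlevel : {v : V | G.dist x v = t} = ↑A := by
    ext v
    simp [A]
  rw [hpairs, hlevel, Set.ncard_coe_finset, Set.ncard_coe_finset]
  calc #{p ∈ A ×ˢ A | G.Adj p.1 p.2} = ∑ v ∈ A, G.degreeIn A v := G.card_filter_adj_product A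
    _ ≤ (7 - 2) * #A := G.sum_degreeIn_le_of_forall_isPathIn_length_lt 7 A fun l hl =>
      G.length_lt_seven_of_isChain ht hcyc hl.isChain hl.nodup fun y hy => by
        simpa [A] using hl.mem y hy
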